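/- Let P = M ⋉ N be a semidirect product of locally profinite groups with N normal, and let U ⊆ P be an open compact subgroup decomposed as U = U_M ⋉ U_N where U_M = U ∩ M and U_N = U ∩ N. Then integration along the fibers of P → M, f ↦ (m ↦ ∫_N f(mn) dn) (with Haar measures giving U, U_M, U_N volume 1), defines a ring homomorphism r_M : H(P,U) → H(M,U_M), and r_M([UαU]) = Σᵢ [ᾱᵢ U_M] where UαU = ⊔ᵢ αᵢU and ᾱᵢ is the image of αᵢ in M. -/

import Mathlib

open scoped Pointwise
open MeasureTheory

/-!
STATEMENT 5: Let `P = M ⋉ N` be a semidirect product of locally profinite groups with `N`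
normal, and let `U ⊆ P` be open compact and decomposed, `U = U_M ⋉ U_N` with `U_M = U ∩ M`,
`U_N = U ∩ N`.  Then integration along the fibers of `P → M`, `f ↦ (m ↦ ∫_N f(mn) dn)`
(Haar measures giving `U`, `U_M`, `U_N` volume 1), defines a ring homomorphism
`r_M : H(P,U) → H(M,U_M)`, and `r_M([UαU]) = Σᵢ [ᾱᵢ U_M]` where `UαU = ⊔ᵢ αᵢU` and `ᾱᵢ` is
the image of `αᵢ` in `M`.
-/

/-- A compactly supported, `U`-bi-invariant, ℤ-valued function (an element of `H(P,U)`). -/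
def IsHeckeFunction {P : Type*} [Group P] [TopologicalSpace P] (U : Subgroup P)
    (f : P → ℤ) : Prop :=
  HasCompactSupport f ∧ ∀ u₁ ∈ U, ∀ u₂ ∈ U, ∀ g : P, f (u₁ * g * u₂) = f g

/-- Convolution with respect to a measure. -/
noncomputable def heckeConv {P : Type*} [Group P] [MeasurableSpace P]
    (μ : Measure P) (f₁ f₂ : P → ℝ) : P → ℝ :=
  fun g => ∫ x, f₁ x * f₂ (x⁻¹ * g) ∂μ

/-- Integration along the fibers of `P → M`. -/
noncomputable def fiberInt {P : Type*} [Group P] (M N : Subgroup P)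
    [MeasurableSpace ↥N] (μN : Measure ↥N) (f : P → ℝ) : ↥M → ℝ :=
  fun x => ∫ y : ↥N, f ((x : P) * (y : P)) ∂μN

/- Fiber integration `f ↦ (m ↦ ∫_N f(mn) dn)` only sees the coset `mN`: by left invariance of `dn`
and normality of `N`, `∫_N f(qn) dn = ∫_N f(pn) dn` whenever `qp⁻¹ ∈ N`. For products, the
`M`-convolution of `r_M f₁` and `r_M f₂` at `x` is the `M × N`-integral of
`f₁(mn) · ∫_N f₂((mn)⁻¹ x n') dn'`, which the decomposition of `dp` folds into a `P`-integral;
swapping it with the inner `N`-integral (everything is compactly supported) gives `r_M(f₁ * f₂)(x)`.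
For `[U]`: since `U` is decomposed, `mn ∈ U` forces `m ∈ U_M`, so the fiber over `m` is `U_N` or
empty; a translate `aU` reduces to this because `a π(a)⁻¹ ∈ N`. -/

section

variable {P : Type*} [Group P]

lemma mul_inv_proj_mem {M N : Subgroup P} (hcompl : N.IsComplement' M) (π : P →* M)
    (hπM : ∀ x : M, π x = x) (hπN : ∀ x ∈ N, π x = 1) (a : P) : a * (π a : P)⁻¹ ∈ N := by
  obtain ⟨⟨n, m⟩, rfl⟩ := (hcompl.existsUnique a).exists
  simp [hπM, hπN _ n.2]

lemma mem_of_mul_mem_of_decomposed {M N U : Subgroup P} (π : P →* M)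
    (hπM : ∀ x : M, π x = x) (hπN : ∀ x ∈ N, π x = 1)
    (hUdec : ∀ u ∈ U, ∃ x ∈ (U : Set P) ∩ (M : Set P), ∃ y ∈ (U : Set P) ∩ (N : Set P), u = x * y)
    (x : M) (n : P) (hn : n ∈ N) (h : (x : P) * n ∈ U) : (x : P) ∈ U := by
  obtain ⟨y, ⟨hyU, hyM⟩, z, ⟨-, hzN⟩, hxn⟩ := hUdec _ h
  have hx : x = π y := by simpa [hπM, hπN _ hn, hπN _ hzN] using congrArg π hxn
  rwa [hx.trans (hπM ⟨y, hyM⟩)]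

lemma fiberInt_indicator_iUnion [MeasurableSpace P] {M N : Subgroup P} {μN : Measure N}
    {ι : Type*} [Fintype ι] {t : ι → Set P} (ht : Pairwise (Function.onFun Disjoint t)) (x : M)
    (hint : ∀ i, Integrable (fun n : N => (t i).indicator (fun _ => (1 : ℝ)) (x * n)) μN) :
    fiberInt M N μN ((⋃ i, t i).indicator fun _ => (1 : ℝ)) x =
      ∑ i, fiberInt M N μN ((t i).indicator fun _ => (1 : ℝ)) x := by
  have hsum : ∀ y, (⋃ i, t i).indicator (fun _ => (1 : ℝ)) y =
      ∑ i, (t i).indicator (fun _ => (1 : ℝ)) y := fun y => by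
    simpa using Finset.indicator_biUnion_apply Finset.univ t (fun i _ j _ hij => ht hij) y
  simp only [fiberInt, hsum]
  exact integral_finsetSum _ fun i _ => hint i

section Topological

variable [TopologicalSpace P]

namespace IsHeckeFunction

variable {U : Subgroup P} {f : P → ℤ}

lemma cast_mul_left (hf : IsHeckeFunction U f) {u : P} (hu : u ∈ U) (g : P) :
    (f (u * g) : ℝ) = f g := by
  simpa using congrArg (Int.cast : ℤ → ℝ) (hf.2 u hu 1 U.one_mem g)

lemma hasCompactSupport_cast (hf : IsHeckeFunction U f) :
    HasCompactSupport fun p => (f p : ℝ) :=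
  hf.1.comp_left Int.cast_zero

end IsHeckeFunction

variable [IsTopologicalGroup P]

lemma continuous_of_mul_right_invariant {X : Type*} [TopologicalSpace X] {U : Subgroup P}
    (hU : IsOpen (U : Set P)) {f : P → X} (hf : ∀ g, ∀ u ∈ U, f (g * u) = f g) :
    Continuous f := by
  refine IsLocallyConstant.continuous ((IsLocallyConstant.iff_exists_open f).2 fun g => ?_)
  refine ⟨g • (U : Set P), hU.smul g, ⟨1, U.one_mem, mul_one g⟩, ?_⟩
  rintro _ ⟨u, hu, rfl⟩
  exact hf g u hu

lemma IsHeckeFunction.continuous_cast {U : Subgroup P} {f : P → ℤ} (hU : IsOpen (U : Set P))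
    (hf : IsHeckeFunction U f) : Continuous fun p => (f p : ℝ) :=
  continuous_of_mul_right_invariant hU fun g u hu => by
    simpa using congrArg (Int.cast : ℤ → ℝ) (hf.2 1 U.one_mem u hu g)

lemma hasCompactSupport_uncurry_mul_comp_inv_mul {N : Subgroup P} (hN : IsClosed (N : Set P)) {f₁ f₂ : P → ℝ}
    (h₁ : HasCompactSupport f₁) (h₂ : HasCompactSupport f₂) (g : P) :
    HasCompactSupport (Function.uncurry fun (p : P) (n : N) => f₁ p * f₂ (p⁻¹ * g * n)) := by
  have hC : IsCompact (((↑) : N → P) ⁻¹' (g⁻¹ • (tsupport f₁ * tsupport f₂))) :=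
    hN.isClosedEmbedding_subtypeVal.isCompact_preimage ((h₁.mul h₂).smul g⁻¹)
  refine HasCompactSupport.intro (h₁.prod hC) ?_
  rintro ⟨p, n⟩ hpn
  by_cases hp : p ∈ tsupport f₁
  · suffices f₂ (p⁻¹ * g * n) = 0 by simp [this]
    by_contra h0
    refine hpn ⟨hp, ?_⟩
    have hmem : p⁻¹ * g * n ∈ tsupport f₂ := subset_tsupport _ h0
    have hrep : (n : P) = g⁻¹ • (p * (p⁻¹ * g * n)) := by simp [smul_eq_mul, mul_assoc]
    rw [Set.mem_preimage, hrep]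
    exact Set.smul_mem_smul_set (Set.mul_mem_mul hp hmem)
  · simp [image_eq_zero_of_notMem_tsupport hp]

variable [MeasurableSpace P] [BorelSpace P] {M N : Subgroup P} {μN : Measure N}

lemma integral_mul_eq_of_mul_inv_mem [N.Normal] [μN.IsMulLeftInvariant] (f : P → ℝ) {p q : P}
    (h : q * p⁻¹ ∈ N) : ∫ n : N, f (q * n) ∂μN = ∫ n : N, f (p * n) ∂μN := by
  have h' : p⁻¹ * q ∈ N := ‹N.Normal›.mem_comm_iff.1 h
  simpa [← mul_assoc] using integral_mul_left_eq_self (fun n : N => f (p * n)) ⟨p⁻¹ * q, h'⟩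

lemma fiberInt_indicator_eq_measureReal {s : Set P} (hs : MeasurableSet s) (x : M) :
    fiberInt M N μN (s.indicator fun _ => (1 : ℝ)) x =
      μN.real ((fun n : N => (x : P) * n) ⁻¹' s) := by
  have hmeas : Measurable fun n : N => (x : P) * n := measurable_subtype_coe.const_mul _
  calc fiberInt M N μN (s.indicator fun _ => (1 : ℝ)) x
      = ∫ n, ((fun n : N => (x : P) * n) ⁻¹' s).indicator (fun _ => (1 : ℝ)) n ∂μN := rfl
    _ = _ := by simp [integral_indicator_const _ (hmeas hs)]

lemma integrable_indicator_comp_mul_left [IsFiniteMeasureOnCompacts μN]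
    (hN : IsClosed (N : Set P)) {s : Set P} (hsm : MeasurableSet s) (hsc : IsCompact s) (g : P) :
    Integrable (fun n : N => s.indicator (fun _ => (1 : ℝ)) (g * n)) μN := by
  have hpre : (fun n : N => g * (n : P)) ⁻¹' s = ((↑) : N → P) ⁻¹' (g⁻¹ • s) := by
    ext n
    simp [Set.mem_smul_set_iff_inv_smul_mem]
  have hmeas : Measurable fun n : N => g * (n : P) := measurable_subtype_coe.const_mul _
  refine (integrable_indicator_iff (hmeas hsm)).2 (integrableOn_const ?_)
  rw [hpre]
  exact (hN.isClosedEmbedding_subtypeVal.isCompact_preimage (hsc.smul g⁻¹)).measure_lt_top.ne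

lemma fiberInt_indicator_subgroup {U : Subgroup P} (hU : MeasurableSet (U : Set P))
    (hμN : μN {y : N | (y : P) ∈ U} = 1)
    (hMU : ∀ x : M, ∀ n ∈ N, (x : P) * n ∈ U → (x : P) ∈ U) (x : M) :
    fiberInt M N μN ((U : Set P).indicator fun _ => (1 : ℝ)) x =
      Set.indicator {z : M | (z : P) ∈ U} (fun _ => (1 : ℝ)) x := by
  rw [fiberInt_indicator_eq_measureReal hU]
  by_cases hx : (x : P) ∈ U
  · have hpre : (fun n : N => (x : P) * n) ⁻¹' U = {y : N | (y : P) ∈ U} := by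
      ext n
      simp [U.mul_mem_cancel_left hx]
    simp [hpre, measureReal_def, hμN, hx]
  · have hpre : (fun n : N => (x : P) * n) ⁻¹' U = ∅ := by
      ext n
      simpa using fun h => hx (hMU x n n.2 h)
    simp [hpre, hx]

lemma fiberInt_indicator_smul_subgroup [N.Normal] [μN.IsMulLeftInvariant] {U : Subgroup P}
    (hU : MeasurableSet (U : Set P)) (hμN : μN {y : N | (y : P) ∈ U} = 1)
    (hMU : ∀ x : M, ∀ n ∈ N, (x : P) * n ∈ U → (x : P) ∈ U)
    (π : P →* M) (a : P) (ha : a * (π a : P)⁻¹ ∈ N) (x : M) :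
    fiberInt M N μN ((a • (U : Set P)).indicator fun _ => (1 : ℝ)) x =
      Set.indicator {z : M | (z : P) ∈ U} (fun _ => (1 : ℝ)) ((π a)⁻¹ * x) := by
  have hshift : ∀ y, (a • (U : Set P)).indicator (fun _ => (1 : ℝ)) y =
      (U : Set P).indicator (fun _ => (1 : ℝ)) (a⁻¹ * y) := fun _ =>
    Set.indicator_const_eq_indicator_const Set.mem_smul_set_iff_inv_smul_mem
  have hN : (((π a)⁻¹ * x : M) : P) * (a⁻¹ * x)⁻¹ ∈ N := by
    simpa [mul_assoc] using ‹N.Normal›.mem_comm_iff.1 ha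
  calc fiberInt M N μN ((a • (U : Set P)).indicator fun _ => (1 : ℝ)) x
      = ∫ n : N, (U : Set P).indicator (fun _ => (1 : ℝ)) (a⁻¹ * x * n) ∂μN := by
        simp only [fiberInt, hshift, mul_assoc]
    _ = ∫ n : N, (U : Set P).indicator (fun _ => (1 : ℝ)) (((π a)⁻¹ * x : M) * n) ∂μN :=
        (integral_mul_eq_of_mul_inv_mem _ hN).symm
    _ = _ := fiberInt_indicator_subgroup hU hμN hMU _

theorem fiberInt_heckeConv [N.Normal] [μN.IsMulLeftInvariant] [IsFiniteMeasureOnCompacts μN]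
    (hN : IsClosed (N : Set P)) {U : Subgroup P} (hU : IsOpen (U : Set P))
    (μ : Measure P) [IsFiniteMeasureOnCompacts μ] (μM : Measure M)
    (hFubini : ∀ f : P → ℝ, Continuous f → HasCompactSupport f →
      ∫ p, f p ∂μ = ∫ x : M, (∫ y : N, f ((x : P) * (y : P)) ∂μN) ∂μM)
    {f₁ f₂ : P → ℝ} (hc₁ : Continuous f₁) (hs₁ : HasCompactSupport f₁)
    (hc₂ : Continuous f₂) (hs₂ : HasCompactSupport f₂) (hinv₂ : ∀ u ∈ U, ∀ g, f₂ (u * g) = f₂ g)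
    (x : M) :
    heckeConv μM (fiberInt M N μN f₁) (fiberInt M N μN f₂) x =
      fiberInt M N μN (heckeConv μ f₁ f₂) x := by
  set K : P → ℝ := fun p => ∫ n : N, f₂ (p⁻¹ * x * n) ∂μN
  have hK_cont : Continuous K := continuous_of_mul_right_invariant hU fun p u hu => by
    refine integral_congr_ae (Filter.Eventually.of_forall fun n => ?_)
    simpa [mul_assoc] using hinv₂ u⁻¹ (inv_mem hu) (p⁻¹ * (x * n))
  have hK_fiber : ∀ (z : M) (n' : N), K (z * n') = fiberInt M N μN f₂ (z⁻¹ * x) := fun z n' =>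
    integral_mul_eq_of_mul_inv_mem f₂ (by simp [mul_assoc])
  calc heckeConv μM (fiberInt M N μN f₁) (fiberInt M N μN f₂) x
      = ∫ z : M, ∫ n' : N, f₁ (z * n') * K (z * n') ∂μN ∂μM := by
        simp only [hK_fiber, integral_mul_const]
        rfl
    _ = ∫ p, f₁ p * K p ∂μ := (hFubini _ (hc₁.mul hK_cont) hs₁.mul_right).symm
    _ = ∫ p, ∫ n : N, f₁ p * f₂ (p⁻¹ * x * n) ∂μN ∂μ := by simp only [K, integral_const_mul]
    _ = ∫ n : N, ∫ p, f₁ p * f₂ (p⁻¹ * x * n) ∂μ ∂μN :=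
        integral_integral_swap_of_hasCompactSupport (by fun_prop)
          (hasCompactSupport_uncurry_mul_comp_inv_mul hN hs₁ hs₂ x)
    _ = fiberInt M N μN (heckeConv μ f₁ f₂) x := by simp only [fiberInt, heckeConv, mul_assoc]

end Topological

end

theorem stmt_5_general {P : Type*} [Group P] [TopologicalSpace P] [IsTopologicalGroup P]
    [MeasurableSpace P] [BorelSpace P]
    (M N : Subgroup P) [N.Normal]
    (hNclosed : IsClosed (N : Set P))
    -- `P = M ⋉ N`: `N` and `M` are complementary, so every `p ∈ P` is uniquely `n * m`
    (hcompl : Subgroup.IsComplement' N M)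
    -- the projection `π : P → M` killing `N` and restricting to the identity on `M`
    (π : P →* ↥M) (hπM : ∀ x : ↥M, π (x : P) = x) (hπN : ∀ x ∈ N, π x = 1)
    (U : Subgroup P) (hUopen : IsOpen (U : Set P)) (hUcompact : IsCompact (U : Set P))
    -- `U` is decomposed: `U = U_M ⋉ U_N`
    (hUdec : ∀ u ∈ U, ∃ x ∈ (U : Set P) ∩ (M : Set P), ∃ y ∈ (U : Set P) ∩ (N : Set P),
      u = x * y)
    -- left Haar measures on `P`, `M`, `N` giving `U`, `U_M`, `U_N` volume 1 …
    (μ : Measure P) [IsFiniteMeasureOnCompacts μ]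
    (μM : Measure ↥M)
    (μN : Measure ↥N) [μN.IsMulLeftInvariant] [IsFiniteMeasureOnCompacts μN]
    (hμN : μN {y : ↥N | (y : P) ∈ U} = 1)
    -- … satisfying `∫_P f(p) dp = ∫_M ∫_N f(mn) dn dm`
    (hFubini : ∀ f : P → ℝ, Continuous f → HasCompactSupport f →
      ∫ p, f p ∂μ = ∫ x : ↥M, (∫ y : ↥N, f ((x : P) * (y : P)) ∂μN) ∂μM) :
    -- `r_M` is multiplicative on Hecke functions (it is clearly additive), …
    (∀ f₁ f₂ : P → ℤ, IsHeckeFunction U f₁ → IsHeckeFunction U f₂ →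
      ∀ x : ↥M,
        heckeConv μM (fiberInt M N μN fun p => (f₁ p : ℝ))
            (fiberInt M N μN fun p => (f₂ p : ℝ)) x =
          fiberInt M N μN (heckeConv μ (fun p => (f₁ p : ℝ)) fun p => (f₂ p : ℝ)) x) ∧
    -- … it sends the unit `[U]` to the unit `[U_M]`, …
    (∀ x : ↥M,
      fiberInt M N μN (Set.indicator (U : Set P) fun _ => (1 : ℝ)) x =
        Set.indicator {z : ↥M | (z : P) ∈ U} (fun _ => (1 : ℝ)) x) ∧
    -- … and for `α ∈ P` with `UαU = ⊔ᵢ αᵢ U` one has `r_M([UαU]) = Σᵢ [ᾱᵢ U_M]`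
    (∀ (α : P) {m : ℕ} (a : Fin m → P),
      ((U : Set P) * {α} * (U : Set P) = ⋃ i, a i • (U : Set P)) →
      Pairwise (Function.onFun Disjoint fun i => a i • (U : Set P)) →
      ∀ x : ↥M,
        fiberInt M N μN (Set.indicator ((U : Set P) * {α} * (U : Set P)) fun _ => (1 : ℝ)) x =
          ∑ i, Set.indicator {z : ↥M | (z : P) ∈ U} (fun _ => (1 : ℝ)) ((π (a i))⁻¹ * x)) := by
  have hUmeas : MeasurableSet (U : Set P) := hUopen.measurableSet
  have hMU : ∀ x : M, ∀ n ∈ N, (x : P) * n ∈ U → (x : P) ∈ U :=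
    mem_of_mul_mem_of_decomposed π hπM hπN hUdec
  refine ⟨fun f₁ f₂ hf₁ hf₂ x => ?_, fiberInt_indicator_subgroup hUmeas hμN hMU,
    fun α m a hcover hdisj x => ?_⟩
  · exact fiberInt_heckeConv hNclosed hUopen μ μM hFubini (hf₁.continuous_cast hUopen)
      hf₁.hasCompactSupport_cast (hf₂.continuous_cast hUopen) hf₂.hasCompactSupport_cast
      (fun u hu g => hf₂.cast_mul_left hu g) x
  · rw [hcover, fiberInt_indicator_iUnion hdisj x fun i => integrable_indicator_comp_mul_left
      hNclosed (hUopen.smul (a i)).measurableSet (hUcompact.smul (a i)) x]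
    exact Finset.sum_congr rfl fun i _ => fiberInt_indicator_smul_subgroup hUmeas hμN hMU π (a i)
      (mul_inv_proj_mem hcompl π hπM hπN (a i)) x

theorem stmt_5 {P : Type*} [Group P] [TopologicalSpace P] [IsTopologicalGroup P]
    [LocallyCompactSpace P] [TotallyDisconnectedSpace P] [T2Space P]
    [MeasurableSpace P] [BorelSpace P]
    (M N : Subgroup P) [N.Normal] (hMclosed : IsClosed (M : Set P))
    (hNclosed : IsClosed (N : Set P))
    -- `P = M ⋉ N`: `N` and `M` are complementary, so every `p ∈ P` is uniquely `n * m`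
    (hcompl : Subgroup.IsComplement' N M)
    -- the projection `π : P → M` killing `N` and restricting to the identity on `M`
    (π : P →* ↥M) (hπM : ∀ x : ↥M, π (x : P) = x) (hπN : ∀ x ∈ N, π x = 1)
    (U : Subgroup P) (hUopen : IsOpen (U : Set P)) (hUcompact : IsCompact (U : Set P))
    -- `U` is decomposed: `U = U_M ⋉ U_N`
    (hUdec : ∀ u ∈ U, ∃ x ∈ (U : Set P) ∩ (M : Set P), ∃ y ∈ (U : Set P) ∩ (N : Set P),
      u = x * y)
    -- left Haar measures on `P`, `M`, `N` giving `U`, `U_M`, `U_N` volume 1 …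
    (μ : Measure P) [μ.IsMulLeftInvariant] [IsFiniteMeasureOnCompacts μ]
    (hμU : μ (U : Set P) = 1)
    (μM : Measure ↥M) [μM.IsMulLeftInvariant] [IsFiniteMeasureOnCompacts μM]
    (hμM : μM {x : ↥M | (x : P) ∈ U} = 1)
    (μN : Measure ↥N) [μN.IsMulLeftInvariant] [IsFiniteMeasureOnCompacts μN]
    (hμN : μN {y : ↥N | (y : P) ∈ U} = 1)
    -- … satisfying `∫_P f(p) dp = ∫_M ∫_N f(mn) dn dm`
    (hFubini : ∀ f : P → ℝ, Continuous f → HasCompactSupport f →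
      ∫ p, f p ∂μ = ∫ x : ↥M, (∫ y : ↥N, f ((x : P) * (y : P)) ∂μN) ∂μM) :
    -- `r_M` is multiplicative on Hecke functions (it is clearly additive), …
    (∀ f₁ f₂ : P → ℤ, IsHeckeFunction U f₁ → IsHeckeFunction U f₂ →
      ∀ x : ↥M,
        heckeConv μM (fiberInt M N μN fun p => (f₁ p : ℝ))
            (fiberInt M N μN fun p => (f₂ p : ℝ)) x =
          fiberInt M N μN (heckeConv μ (fun p => (f₁ p : ℝ)) fun p => (f₂ p : ℝ)) x) ∧
    -- … it sends the unit `[U]` to the unit `[U_M]`, …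
    (∀ x : ↥M,
      fiberInt M N μN (Set.indicator (U : Set P) fun _ => (1 : ℝ)) x =
        Set.indicator {z : ↥M | (z : P) ∈ U} (fun _ => (1 : ℝ)) x) ∧
    -- … and for `α ∈ P` with `UαU = ⊔ᵢ αᵢ U` one has `r_M([UαU]) = Σᵢ [ᾱᵢ U_M]`
    (∀ (α : P) {m : ℕ} (a : Fin m → P),
      ((U : Set P) * {α} * (U : Set P) = ⋃ i, a i • (U : Set P)) →
      Pairwise (Function.onFun Disjoint fun i => a i • (U : Set P)) →
      ∀ x : ↥M,
        fiberInt M N μN (Set.indicator ((U : Set P) * {α} * (U : Set P)) fun _ => (1 : ℝ)) x =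
          ∑ i, Set.indicator {z : ↥M | (z : P) ∈ U} (fun _ => (1 : ℝ)) ((π (a i))⁻¹ * x)) :=
  stmt_5_general M N hNclosed hcompl π hπM hπN U hUopen hUcompact hUdec μ μM μN hμN hFubini
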